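/- arXiv:2208.14701 — 4 statements merged into one kernel-verified Lean document; each statement's English description precedes it below -/
import Mathlib

section
/- For all φ ∈ H¹(𝒯_h) and all w ∈ X_{Γ_N}(div,Ω), one has |(𝔊(φ), w)_{𝒯_h} + (φ, div w)_{𝒯_h} − (φ, w·n)_{ℱ_h^R}| ≤ ‖φ‖_{†,1,𝒯_h} · ‖w‖_{†,div,𝒯_h}, i.e. the two mesh-dependent norms are dual to each other with respect to the broken integration-by-parts pairing. -/
noncomputable section

/-- Abstract setting for interior penalty discontinuous Galerkin (IPDG) discretizations of
Helmholtz problems.  `Elem` indexes the mesh elements `K ∈ 𝒯_h`, `FaceR` the Robin boundary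
faces `F ∈ ℱ_h^R`.  `V` plays the role of the broken Sobolev space `H¹(𝒯_h)` and `W` of
`X_{Γ_N}(div,Ω)`; `H10` is the conforming subspace `H¹_{Γ_D}(Ω) ⊆ H¹(𝒯_h)`, `Pp` the broken
polynomial space `𝒫_p(𝒯_h)` and `Wh` the BDM space `[𝒫_p(𝒯_h)]^d ∩ X_{Γ_N}(div,Ω)`.
The local quantities are: `normL2 K v = ‖v‖_K`, `normAG K v = ‖𝔊(v)‖_{A,K}` (the A-weighted
norm of the discrete/lifted gradient), `normF F v = ‖v‖_F`, `normAinv K w = ‖w‖_{A⁻¹,K}`,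
`normDiv K w = ‖div w‖_K`, `normWn F w = ‖w·n‖_F`, and the local L² pairings
`pairG K φ w = (𝔊(φ), w)_K`, `pairDiv K φ w = (φ, div w)_K`, `pairWn F φ w = (φ, w·n)_F`,
`pairMu K φ v = (μ φ, v)_K`, `pairGam F φ v = (γ φ, v)_F`, `pairAG K φ v = (A 𝔊(φ), 𝔊(v))_K`.
`sh` is the stabilization form `s_h`, `b` the continuous Helmholtz sesquilinear form and
`rhs v = (f, v)_Ω` the load functional.  The structure fields also record the standing
assumptions of the paper: positivity of the mesh/coefficient data, (semi)norm axioms,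
local Cauchy–Schwarz inequalities, sesquilinearity, vanishing of `s_h` on conforming
arguments, the conforming and discrete integration-by-parts identities for the discrete
gradient, and consistency of the continuous form. -/
structure DG where
  Elem : Type
  FaceR : Type
  [finElem : Fintype Elem]
  [finFaceR : Fintype FaceR]
  V : Type
  W : Type
  [acgV : AddCommGroup V]
  [modV : Module ℂ V]
  [acgW : AddCommGroup W]
  [modW : Module ℂ W]
  H10 : Submodule ℂ V
  Pp : Submodule ℂ V
  Wh : Submodule ℂ W
  ω : ℝ
  ω_pos : 0 < ω
  hK : Elem → ℝ
  αK : Elem → ℝ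
  μK : Elem → ℝ
  hF : FaceR → ℝ
  αF : FaceR → ℝ
  γF : FaceR → ℝ
  hK_pos : ∀ K, 0 < hK K
  αK_pos : ∀ K, 0 < αK K
  μK_pos : ∀ K, 0 < μK K
  hF_pos : ∀ F, 0 < hF F
  αF_pos : ∀ F, 0 < αF F
  γF_pos : ∀ F, 0 < γF F
  normL2 : Elem → V → ℝ
  normAG : Elem → V → ℝ
  normF : FaceR → V → ℝ
  normAinv : Elem → W → ℝ
  normDiv : Elem → W → ℝ
  normWn : FaceR → W → ℝ
  normL2_nonneg : ∀ K v, 0 ≤ normL2 K v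
  normAG_nonneg : ∀ K v, 0 ≤ normAG K v
  normF_nonneg : ∀ F v, 0 ≤ normF F v
  normAinv_nonneg : ∀ K w, 0 ≤ normAinv K w
  normDiv_nonneg : ∀ K w, 0 ≤ normDiv K w
  normWn_nonneg : ∀ F w, 0 ≤ normWn F w
  normL2_add : ∀ K u v, normL2 K (u + v) ≤ normL2 K u + normL2 K v
  normL2_smul : ∀ K (c : ℂ) v, normL2 K (c • v) = ‖c‖ * normL2 K v
  normF_add : ∀ F u v, normF F (u + v) ≤ normF F u + normF F v
  normF_smul : ∀ F (c : ℂ) v, normF F (c • v) = ‖c‖ * normF F v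
  pairG : Elem → V → W → ℂ
  pairDiv : Elem → V → W → ℂ
  pairWn : FaceR → V → W → ℂ
  pairMu : Elem → V → V → ℂ
  pairGam : FaceR → V → V → ℂ
  pairAG : Elem → V → V → ℂ
  sh : V → V → ℂ
  b : V → V → ℂ
  rhs : V → ℂ
  pairG_sub_left : ∀ K u v w, pairG K (u - v) w = pairG K u w - pairG K v w
  pairG_sub_right : ∀ K u w w', pairG K u (w - w') = pairG K u w - pairG K u w'
  pairDiv_sub_left : ∀ K u v w, pairDiv K (u - v) w = pairDiv K u w - pairDiv K v w
  pairDiv_sub_right : ∀ K u w w', pairDiv K u (w - w') = pairDiv K u w - pairDiv K u w'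
  pairWn_sub_left : ∀ F u v w, pairWn F (u - v) w = pairWn F u w - pairWn F v w
  pairWn_sub_right : ∀ F u w w', pairWn F u (w - w') = pairWn F u w - pairWn F u w'
  pairMu_sub_left : ∀ K u v r, pairMu K (u - v) r = pairMu K u r - pairMu K v r
  pairMu_sub_right : ∀ K u v r, pairMu K u (v - r) = pairMu K u v - pairMu K u r
  pairGam_sub_left : ∀ F u v r, pairGam F (u - v) r = pairGam F u r - pairGam F v r
  pairGam_sub_right : ∀ F u v r, pairGam F u (v - r) = pairGam F u v - pairGam F u r
  pairAG_sub_left : ∀ K u v r, pairAG K (u - v) r = pairAG K u r - pairAG K v r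
  pairAG_sub_right : ∀ K u v r, pairAG K u (v - r) = pairAG K u v - pairAG K u r
  sh_sub_left : ∀ u v r, sh (u - v) r = sh u r - sh v r
  sh_sub_right : ∀ u v r, sh u (v - r) = sh u v - sh u r
  pairMu_symm : ∀ K u v, pairMu K u v = starRingEnd ℂ (pairMu K v u)
  pairGam_symm : ∀ F u v, pairGam F u v = starRingEnd ℂ (pairGam F v u)
  pairAG_symm : ∀ K u v, pairAG K u v = starRingEnd ℂ (pairAG K v u)
  csG : ∀ K φ w, ‖pairG K φ w‖ ≤ normAG K φ * normAinv K w
  csDiv : ∀ K φ w, ‖pairDiv K φ w‖ ≤ normL2 K φ * normDiv K w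
  csWn : ∀ F φ w, ‖pairWn F φ w‖ ≤ normF F φ * normWn F w
  csMu : ∀ K φ v, ‖pairMu K φ v‖ ≤ μK K * (normL2 K φ * normL2 K v)
  csGam : ∀ F φ v, ‖pairGam F φ v‖ ≤ γF F * (normF F φ * normF F v)
  csAG : ∀ K φ v, ‖pairAG K φ v‖ ≤ normAG K φ * normAG K v
  pairMu_self : ∀ K v, pairMu K v v = ((μK K * normL2 K v ^ 2 : ℝ) : ℂ)
  pairGam_self : ∀ F v, pairGam F v v = ((γF F * normF F v ^ 2 : ℝ) : ℂ)
  pairAG_self : ∀ K v, pairAG K v v = ((normAG K v ^ 2 : ℝ) : ℂ)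
  sh_conf : ∀ u v, u ∈ H10 ∨ v ∈ H10 → sh u v = 0
  ibp_conf : ∀ u ∈ H10, ∀ w : W,
    (∑ K : Elem, (pairG K u w + pairDiv K u w)) = ∑ F : FaceR, pairWn F u w
  ibp_disc : ∀ u : V, ∀ w ∈ Wh,
    (∑ K : Elem, (pairG K u w + pairDiv K u w)) = ∑ F : FaceR, pairWn F u w
  consistency : ∀ u ∈ H10, ∀ v ∈ H10,
    b u v = -((ω ^ 2 : ℝ) : ℂ) * (∑ K : Elem, pairMu K u v)
      - Complex.I * (ω : ℂ) * (∑ F : FaceR, pairGam F u v)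
      + ∑ K : Elem, pairAG K u v

attribute [instance] DG.finElem DG.finFaceR DG.acgV DG.modV DG.acgW DG.modW

namespace DG

variable (C : DG)

/-- `ϑ_K := √(α_K/μ_K)`. -/
def thetaK (K : C.Elem) : ℝ := Real.sqrt (C.αK K / C.μK K)

/-- `ϑ_F := α_F/γ_F`. -/
def thetaF (F : C.FaceR) : ℝ := C.αF F / C.γF F

/-- The square of the mesh-dependent norm `‖v‖_{†,1,𝒯_h}`. -/
def dag1Sq (v : C.V) : ℝ :=
  (∑ K : C.Elem, (max 1 (C.ω ^ 2 * C.hK K ^ 2 / C.thetaK K ^ 2) * (C.αK K / C.hK K ^ 2) *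
      C.normL2 K v ^ 2 + C.normAG K v ^ 2))
  + ∑ F : C.FaceR, max 1 (C.ω * C.hF F / C.thetaF F) * (C.αF F / C.hF F) * C.normF F v ^ 2

/-- The mesh-dependent norm `‖v‖_{†,1,𝒯_h}`. -/
def dag1 (v : C.V) : ℝ := Real.sqrt (C.dag1Sq v)

/-- The square of the mesh-dependent norm `‖w‖_{†,div,𝒯_h}`. -/
def dagDivSq (w : C.W) : ℝ :=
  (∑ K : C.Elem, (C.normAinv K w ^ 2 + C.hK K ^ 2 / C.αK K * C.normDiv K w ^ 2))
  + ∑ F : C.FaceR, C.hF F / C.αF F * C.normWn F w ^ 2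

/-- The mesh-dependent norm `‖w‖_{†,div,𝒯_h}`. -/
def dagDiv (w : C.W) : ℝ := Real.sqrt (C.dagDivSq w)

/-- The square of the broken energy norm `|||v|||_{ω,𝒯_h}`. -/
def enormSq (v : C.V) : ℝ :=
  (∑ K : C.Elem, (C.ω ^ 2 * C.μK K * C.normL2 K v ^ 2 + C.normAG K v ^ 2))
  + ∑ F : C.FaceR, C.ω * C.γF F * C.normF F v ^ 2

/-- The broken energy norm `|||v|||_{ω,𝒯_h}`. -/
def enorm (v : C.V) : ℝ := Real.sqrt (C.enormSq v)

/-- `‖v‖_{μ,𝒯_h}`. -/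
def normMuT (v : C.V) : ℝ := Real.sqrt (∑ K : C.Elem, C.μK K * C.normL2 K v ^ 2)

/-- `‖v‖_{γ,ℱ_h^R}`. -/
def normGamR (v : C.V) : ℝ := Real.sqrt (∑ F : C.FaceR, C.γF F * C.normF F v ^ 2)

/-- `‖𝔊(v)‖_{A,𝒯_h}`; for conforming `v` this is `‖∇v‖_{A,Ω}`. -/
def normAgrad (v : C.V) : ℝ := Real.sqrt (∑ K : C.Elem, C.normAG K v ^ 2)

/-- `‖div w‖_Ω`. -/
def normDivT (w : C.W) : ℝ := Real.sqrt (∑ K : C.Elem, C.normDiv K w ^ 2)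

/-- The broken integration-by-parts pairing
`(𝔊(φ), w)_{𝒯_h} + (φ, div w)_{𝒯_h} − (φ, w·n)_{ℱ_h^R}`. -/
def pairB (φ : C.V) (w : C.W) : ℂ :=
  (∑ K : C.Elem, (C.pairG K φ w + C.pairDiv K φ w)) - ∑ F : C.FaceR, C.pairWn F φ w

/-- `(μ φ, v)_{𝒯_h}`. -/
def muPair (φ v : C.V) : ℂ := ∑ K : C.Elem, C.pairMu K φ v

/-- `(γ φ, v)_{ℱ_h^R}`. -/
def gamPair (φ v : C.V) : ℂ := ∑ F : C.FaceR, C.pairGam F φ v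

/-- `(A 𝔊(φ), 𝔊(v))_{𝒯_h}`. -/
def agPair (φ v : C.V) : ℂ := ∑ K : C.Elem, C.pairAG K φ v

/-- The IPDG form `a_h(φ,v) := (A𝔊(φ), 𝔊(v))_{𝒯_h} + s_h(φ,v)`. -/
def ah (φ v : C.V) : ℂ := C.agPair φ v + C.sh φ v

/-- The discrete Helmholtz form
`b_h(φ,v) := −ω²(μφ,v)_{𝒯_h} − iω(γφ,v)_{ℱ_h^R} + a_h(φ,v)`. -/
def bh (φ v : C.V) : ℂ :=
  -((C.ω ^ 2 : ℝ) : ℂ) * C.muPair φ v - Complex.I * (C.ω : ℂ) * C.gamPair φ v + C.ah φ v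

/-- The positive Hermitian counterpart
`b_h^+(φ,v) := ω²(μφ,v)_{𝒯_h} + ω(γφ,v)_{ℱ_h^R} + (A𝔊(φ),𝔊(v))_{𝒯_h}`. -/
def bhp (φ v : C.V) : ℂ :=
  ((C.ω ^ 2 : ℝ) : ℂ) * C.muPair φ v + (C.ω : ℂ) * C.gamPair φ v + C.agPair φ v

/-- `Repr v σ` expresses that `σ = A∇v ∈ X_{Γ_N}(div,Ω)`, through the identity
`(A𝔊(φ), 𝔊(v))_{𝒯_h} = (𝔊(φ), A∇v)_{𝒯_h}` for all broken `φ`. -/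
def Repr (v : C.V) (σ : C.W) : Prop := ∀ φ : C.V, C.agPair φ v = ∑ K : C.Elem, C.pairG K φ σ

/-- `u` is the exact solution: `u ∈ H¹_{Γ_D}(Ω)` and `b(u,v) = (f,v)_Ω` for all
`v ∈ H¹_{Γ_D}(Ω)`. -/
def IsExactSol (u : C.V) : Prop := u ∈ C.H10 ∧ ∀ v ∈ C.H10, C.b u v = C.rhs v

/-- `uh` solves the IPDG equations: `uh ∈ 𝒫_p(𝒯_h)` and `b_h(uh,v_h) = (f,v_h)_{𝒯_h}`
for all `v_h ∈ 𝒫_p(𝒯_h)`. -/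
def IsDiscreteSol (uh : C.V) : Prop := uh ∈ C.Pp ∧ ∀ v ∈ C.Pp, C.bh uh v = C.rhs v

/-- `πg` is the `‖·‖_{†,1,𝒯_h}`-best approximation onto `H¹_{Γ_D}(Ω)`. -/
def IsPig (πg : C.V → C.V) : Prop :=
  ∀ v, πg v ∈ C.H10 ∧ ∀ s ∈ C.H10, C.dag1 (v - πg v) ≤ C.dag1 (v - s)

/-- `π` is the `‖·‖_{†,1,𝒯_h}`-best approximation onto the Lagrange space
`𝒫_p(𝒯_h) ∩ H¹_{Γ_D}(Ω)`. -/
def IsPihg (π : C.V → C.V) : Prop :=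
  ∀ v, π v ∈ C.Pp ⊓ C.H10 ∧ ∀ s ∈ C.Pp ⊓ C.H10, C.dag1 (v - π v) ≤ C.dag1 (v - s)

/-- `π` is the `‖·‖_{†,div,𝒯_h}`-best approximation onto the BDM space
`[𝒫_p(𝒯_h)]^d ∩ X_{Γ_N}(div,Ω)`. -/
def IsPihd (π : C.W → C.W) : Prop :=
  ∀ w, π w ∈ C.Wh ∧ ∀ s ∈ C.Wh, C.dagDiv (w - π w) ≤ C.dagDiv (w - s)

/-- `dual ψ = u*_ψ` is the volume dual solution, `b(w, u*_ψ) = ω(μ w, ψ)_Ω` for all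
conforming `w`, and `Adual ψ = A∇u*_ψ ∈ X_{Γ_N}(div,Ω)`. -/
def IsVolDual (dual : C.V → C.V) (Adual : C.V → C.W) : Prop :=
  ∀ ψ : C.V, dual ψ ∈ C.H10 ∧
    (∀ w ∈ C.H10, C.b w (dual ψ) = (C.ω : ℂ) * C.muPair w ψ) ∧
    C.Repr (dual ψ) (Adual ψ)

/-- `dual Ψ = U*_Ψ` is the Robin-boundary dual solution,
`b(w, U*_Ψ) = ω^{1/2}(γ w, Ψ)_{Γ_R}`, and `Adual Ψ = A∇U*_Ψ`. -/
def IsRobDual (dual : C.V → C.V) (Adual : C.V → C.W) : Prop :=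
  ∀ ψ : C.V, dual ψ ∈ C.H10 ∧
    (∀ w ∈ C.H10, C.b w (dual ψ) = ((Real.sqrt C.ω : ℝ) : ℂ) * C.gamPair w ψ) ∧
    C.Repr (dual ψ) (Adual ψ)

/-- `γg` and `γd` are upper bounds for the volume approximation factors
`γ̌_{ba,g}` and `γ̌_{ba,d}`. -/
def VolFactors (dual : C.V → C.V) (Adual : C.V → C.W) (πhg : C.V → C.V) (πhd : C.W → C.W)
    (γg γd : ℝ) : Prop :=
  ∀ ψ : C.V, C.dag1 (dual ψ - πhg (dual ψ)) ≤ γg * C.normMuT ψ ∧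
    C.dagDiv (Adual ψ - πhd (Adual ψ)) ≤ γd * C.normMuT ψ

/-- `γg` and `γd` are upper bounds for the Robin approximation factors
`γ̃_{ba,g}` and `γ̃_{ba,d}`. -/
def RobFactors (dual : C.V → C.V) (Adual : C.V → C.W) (πhg : C.V → C.V) (πhd : C.W → C.W)
    (γg γd : ℝ) : Prop :=
  ∀ ψ : C.V, C.dag1 (dual ψ - πhg (dual ψ)) ≤ γg * C.normGamR ψ ∧
    C.dagDiv (Adual ψ - πhd (Adual ψ)) ≤ γd * C.normGamR ψ

/-- The conforming residual norm
`R_r := sup{ |b_h(u−u_h, v)| : v ∈ H¹_{Γ_D}(Ω), ‖∇v‖_{A,Ω} = 1 }`. -/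
def Rr (u uh : C.V) : ℝ :=
  sSup {r : ℝ | ∃ v ∈ C.H10, C.normAgrad v = 1 ∧ r = ‖C.bh (u - uh) v‖}

/-- The non-conformity measure `R_c := ‖u_h − π^g u_h‖_{†,1,𝒯_h}`. -/
def Rc (πg : C.V → C.V) (uh : C.V) : ℝ := C.dag1 (uh - πg uh)

/-- The total abstract estimator `R := (R_r² + R_c²)^{1/2}`. -/
def Rtot (πg : C.V → C.V) (u uh : C.V) : ℝ :=
  Real.sqrt (C.Rr u uh ^ 2 + C.Rc πg uh ^ 2)

/-- `ω h_F^⋆/ϑ_F^⋆ := max_{F ∈ ℱ_h^R} ω h_F/ϑ_F`. -/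
def ratioFstar : ℝ := ⨆ F : C.FaceR, C.ω * C.hF F / C.thetaF F

/-- `ω h_K^⋆/ϑ_K^⋆ := max_{K ∈ 𝒯_h} ω h_K/ϑ_K`. -/
def ratioKstar : ℝ := ⨆ K : C.Elem, C.ω * C.hK K / C.thetaK K

end DG

/-!
Each local pairing is bounded by Cauchy–Schwarz, and the weights `α_K/h_K²` and `α_F/h_F` are
split between the two factors so that the inverse weights are exactly those of `‖·‖_{†,div}`.
A final weighted Cauchy–Schwarz inequality over all elements and Robin faces gives the bound,
the factors `max 1 (…) ≥ 1` in `‖·‖_{†,1}` only enlarging the right-hand side.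
-/

namespace Real

variable {ι : Type*}

theorem sum_mul_le_sqrt_mul_sqrt_weighted (s : Finset ι) (c f g : ι → ℝ)
    (hc : ∀ i ∈ s, 0 < c i) :
    ∑ i ∈ s, f i * g i ≤ √(∑ i ∈ s, c i * f i ^ 2) * √(∑ i ∈ s, (c i)⁻¹ * g i ^ 2) := by
  have hsplit : ∀ i ∈ s, f i * g i = (√(c i) * f i) * ((√(c i))⁻¹ * g i) := fun i hi => by
    have := (sqrt_pos.2 (hc i hi)).ne'
    field_simp
  rw [Finset.sum_congr rfl hsplit]
  convert sum_mul_le_sqrt_mul_sqrt s _ _ using 3 <;>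
    refine Finset.sum_congr rfl fun i hi => ?_ <;>
    simp only [mul_pow, inv_pow, sq_sqrt (hc i hi).le]

end Real

namespace DG

variable (C : DG)

theorem norm_pairB_le (φ : C.V) (w : C.W) :
    ‖C.pairB φ w‖ ≤ ∑ K, C.normAG K φ * C.normAinv K w
      + (∑ K, C.normL2 K φ * C.normDiv K w + ∑ F, C.normF F φ * C.normWn F w) := by
  rw [← add_assoc, ← Finset.sum_add_distrib]
  calc ‖C.pairB φ w‖
      ≤ ‖∑ K, (C.pairG K φ w + C.pairDiv K φ w)‖ + ‖∑ F, C.pairWn F φ w‖ := norm_sub_le _ _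
    _ ≤ ∑ K, (‖C.pairG K φ w‖ + ‖C.pairDiv K φ w‖) + ∑ F, ‖C.pairWn F φ w‖ := by
      gcongr
      · exact (norm_sum_le _ _).trans (Finset.sum_le_sum fun K _ => norm_add_le _ _)
      · exact norm_sum_le _ _
    _ ≤ _ := by
      gcongr with K _ F
      · exact C.csG K φ w
      · exact C.csDiv K φ w
      · exact C.csWn F φ w

theorem weighted_sum_le_dag1Sq (φ : C.V) :
    ∑ K, C.normAG K φ ^ 2 + (∑ K, C.αK K / C.hK K ^ 2 * C.normL2 K φ ^ 2
      + ∑ F, C.αF F / C.hF F * C.normF F φ ^ 2) ≤ C.dag1Sq φ := by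
  rw [dag1Sq, ← add_assoc, add_comm (∑ K, C.normAG K φ ^ 2), ← Finset.sum_add_distrib]
  gcongr with K _ F
  · exact le_mul_of_one_le_left (div_pos (C.αK_pos K) (pow_pos (C.hK_pos K) 2)).le
      (le_max_left _ _)
  · exact le_mul_of_one_le_left (div_pos (C.αF_pos F) (C.hF_pos F)).le (le_max_left _ _)

theorem dagDivSq_eq (w : C.W) :
    C.dagDivSq w = ∑ K, C.normAinv K w ^ 2 + (∑ K, C.hK K ^ 2 / C.αK K * C.normDiv K w ^ 2
      + ∑ F, C.hF F / C.αF F * C.normWn F w ^ 2) := by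
  rw [dagDivSq, Finset.sum_add_distrib, add_assoc]

end DG

/-- duality of the mesh-dependent norms, eq. (2.4) of the paper:
for all `φ ∈ H¹(𝒯_h)` and `w ∈ X_{Γ_N}(div,Ω)`,
`|(𝔊(φ), w)_{𝒯_h} + (φ, div w)_{𝒯_h} − (φ, w·n)_{ℱ_h^R}| ≤ ‖φ‖_{†,1,𝒯_h} ‖w‖_{†,div,𝒯_h}`. -/
theorem dagger_norm_duality (C : DG) (φ : C.V) (w : C.W) :
    ‖C.pairB φ w‖ ≤ C.dag1 φ * C.dagDiv w := by
  have hcs := Real.sum_mul_le_sqrt_mul_sqrt_weighted (ι := C.Elem ⊕ C.Elem ⊕ C.FaceR) Finset.univ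
    (Sum.elim 1 (Sum.elim (fun K => C.αK K / C.hK K ^ 2) (fun F => C.αF F / C.hF F)))
    (Sum.elim (C.normAG · φ) (Sum.elim (C.normL2 · φ) (C.normF · φ)))
    (Sum.elim (C.normAinv · w) (Sum.elim (C.normDiv · w) (C.normWn · w)))
    (by
      rintro (K | K | F) -
      exacts [one_pos, div_pos (C.αK_pos K) (pow_pos (C.hK_pos K) 2),
        div_pos (C.αF_pos F) (C.hF_pos F)])
  simp only [Fintype.sum_sum_type, Sum.elim_inl, Sum.elim_inr, Pi.one_apply, one_mul, inv_one,
    inv_div] at hcs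
  calc ‖C.pairB φ w‖ ≤ _ := C.norm_pairB_le φ w
    _ ≤ _ := hcs
    _ ≤ C.dag1 φ * C.dagDiv w := by
      rw [DG.dag1, DG.dagDiv, C.dagDivSq_eq]
      gcongr
      exact C.weighted_sum_le_dag1Sq φ
end
end

section
/- (Lifting error) For all φ ∈ H¹(𝒯_h), σ ∈ X_{Γ_N}(div,Ω), φ̃ ∈ H¹_{Γ_D}(Ω), and σ_h ∈ [𝒫_p(𝒯_h)]^d ∩ X_{Γ_N}(div,Ω), the identity (𝔊(φ), σ)_{𝒯_h} + (φ, div σ)_{𝒯_h} − (φ, σ·n)_{ℱ_h^R} = (𝔊(φ−φ̃), σ−σ_h)_{𝒯_h} + (φ−φ̃, div(σ−σ_h))_{𝒯_h} − (φ−φ̃, (σ−σ_h)·n)_{ℱ_h^R} holds, and consequently |(𝔊(φ), σ)_{𝒯_h} + (φ, div σ)_{𝒯_h} − (φ, σ·n)_{ℱ_h^R}| ≤ ‖φ−φ̃‖_{†,1,𝒯_h} · ‖σ−σ_h‖_{†,div,𝒯_h}. -/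
noncomputable section

/-!
`pairB` vanishes as soon as its first argument is conforming (integration by parts in
`H¹_{Γ_D}(Ω)`) or its second argument is discrete (the defining property of the lifting on
`[𝒫_p(𝒯_h)]^d ∩ X_{Γ_N}(div,Ω)`), so by bilinearity `pairB φ σ = pairB (φ - φ̃) (σ - σ_h)`.
The bound then comes from the local Cauchy–Schwarz inequalities, after inserting weights
whose products are `≥ 1` (`α_K/h_K²` against `h_K²/α_K`, `α_F/h_F` against `h_F/α_F`),
followed by the discrete Cauchy–Schwarz inequality.
-/

namespace Real

variable {ι : Type*}

theorem sum_mul_le_sqrt_mul_sqrt_of_one_le_mul (s : Finset ι) {x y a b : ι → ℝ}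
    (hxy : ∀ i ∈ s, 0 ≤ x i * y i) (ha : ∀ i ∈ s, 0 ≤ a i) (hb : ∀ i ∈ s, 0 ≤ b i)
    (hab : ∀ i ∈ s, 1 ≤ a i * b i) :
    ∑ i ∈ s, x i * y i ≤ √(∑ i ∈ s, a i * x i ^ 2) * √(∑ i ∈ s, b i * y i ^ 2) := by
  have hweight : ∀ i ∈ s, x i * y i ≤ (√(a i) * x i) * (√(b i) * y i) := fun i hi => by
    have h1 : 1 ≤ √(a i) * √(b i) := by
      rw [← sqrt_mul (ha i hi)]
      exact one_le_sqrt.mpr (hab i hi)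
    nlinarith [hxy i hi]
  refine (Finset.sum_le_sum hweight).trans ((sum_mul_le_sqrt_mul_sqrt s _ _).trans_eq ?_)
  congr 2 <;> refine Finset.sum_congr rfl fun i hi => ?_
  · rw [mul_pow, sq_sqrt (ha i hi)]
  · rw [mul_pow, sq_sqrt (hb i hi)]

theorem sqrt_mul_sqrt_add_sqrt_mul_sqrt_le {a b c d : ℝ} (ha : 0 ≤ a) (hb : 0 ≤ b)
    (hc : 0 ≤ c) (hd : 0 ≤ d) :
    √a * √b + √c * √d ≤ √(a + c) * √(b + d) := by
  have h := sum_sqrt_mul_sqrt_le Finset.univ (f := ![a, c]) (g := ![b, d])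
    (fun i => by fin_cases i <;> assumption) (fun i => by fin_cases i <;> assumption)
  simpa only [Fin.sum_univ_two, Matrix.cons_val_zero, Matrix.cons_val_one] using h

end Real

theorem one_le_max_one_mul_div_mul_div (t : ℝ) {p q : ℝ} (hp : p ≠ 0) (hq : q ≠ 0) :
    1 ≤ max 1 t * (p / q) * (q / p) := by
  rw [mul_assoc, div_mul_div_cancel₀ hq, div_self hp, mul_one]
  exact le_max_left _ _

namespace DG

variable (C : DG)

theorem pairB_sub_left (u v : C.V) (w : C.W) :
    C.pairB (u - v) w = C.pairB u w - C.pairB v w := by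
  simp only [pairB, C.pairG_sub_left, C.pairDiv_sub_left, C.pairWn_sub_left,
    Finset.sum_sub_distrib, Finset.sum_add_distrib]
  ring

theorem pairB_sub_right (u : C.V) (w w' : C.W) :
    C.pairB u (w - w') = C.pairB u w - C.pairB u w' := by
  simp only [pairB, C.pairG_sub_right, C.pairDiv_sub_right, C.pairWn_sub_right,
    Finset.sum_sub_distrib, Finset.sum_add_distrib]
  ring

theorem pairB_eq_zero_of_mem_H10 {u : C.V} (hu : u ∈ C.H10) (w : C.W) : C.pairB u w = 0 :=
  sub_eq_zero.mpr (C.ibp_conf u hu w)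

theorem pairB_eq_zero_of_mem_Wh (u : C.V) {w : C.W} (hw : w ∈ C.Wh) : C.pairB u w = 0 :=
  sub_eq_zero.mpr (C.ibp_disc u w hw)

theorem pairB_eq_pairB_sub_sub (φ : C.V) (σ : C.W) {φt : C.V} (hφt : φt ∈ C.H10)
    {σh : C.W} (hσh : σh ∈ C.Wh) :
    C.pairB φ σ = C.pairB (φ - φt) (σ - σh) := by
  rw [pairB_sub_left, pairB_sub_right, pairB_sub_right, C.pairB_eq_zero_of_mem_Wh _ hσh,
    C.pairB_eq_zero_of_mem_Wh _ hσh, C.pairB_eq_zero_of_mem_H10 hφt]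
  ring

theorem norm_pairB_le_sum (ψ : C.V) (τ : C.W) :
    ‖C.pairB ψ τ‖ ≤
      (∑ K : C.Elem, (C.normAG K ψ * C.normAinv K τ + C.normL2 K ψ * C.normDiv K τ))
        + ∑ F : C.FaceR, C.normF F ψ * C.normWn F τ := by
  refine (norm_sub_le _ _).trans (add_le_add ?_ ?_)
  · exact (norm_sum_le _ _).trans (Finset.sum_le_sum fun K _ =>
      (norm_add_le _ _).trans (add_le_add (C.csG K ψ τ) (C.csDiv K ψ τ)))
  · exact (norm_sum_le _ _).trans (Finset.sum_le_sum fun F _ => C.csWn F ψ τ)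

theorem dag1_weightK_nonneg (K : C.Elem) :
    0 ≤ max 1 (C.ω ^ 2 * C.hK K ^ 2 / C.thetaK K ^ 2) * (C.αK K / C.hK K ^ 2) := by
  have := C.hK_pos K
  have := C.αK_pos K
  positivity

theorem dag1_weightF_nonneg (F : C.FaceR) :
    0 ≤ max 1 (C.ω * C.hF F / C.thetaF F) * (C.αF F / C.hF F) := by
  have := C.hF_pos F
  have := C.αF_pos F
  positivity

theorem dagDiv_weightK_nonneg (K : C.Elem) : 0 ≤ C.hK K ^ 2 / C.αK K :=
  div_nonneg (sq_nonneg _) (C.αK_pos K).le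

theorem dagDiv_weightF_nonneg (F : C.FaceR) : 0 ≤ C.hF F / C.αF F :=
  div_nonneg (C.hF_pos F).le (C.αF_pos F).le

theorem sum_normL2_mul_normDiv_le (ψ : C.V) (τ : C.W) :
    ∑ K, C.normL2 K ψ * C.normDiv K τ ≤
      √(∑ K, max 1 (C.ω ^ 2 * C.hK K ^ 2 / C.thetaK K ^ 2) * (C.αK K / C.hK K ^ 2)
          * C.normL2 K ψ ^ 2)
        * √(∑ K, C.hK K ^ 2 / C.αK K * C.normDiv K τ ^ 2) :=
  Real.sum_mul_le_sqrt_mul_sqrt_of_one_le_mul _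
    (fun K _ => mul_nonneg (C.normL2_nonneg K ψ) (C.normDiv_nonneg K τ))
    (fun K _ => C.dag1_weightK_nonneg K) (fun K _ => C.dagDiv_weightK_nonneg K)
    (fun K _ => one_le_max_one_mul_div_mul_div _ (C.αK_pos K).ne' (pow_pos (C.hK_pos K) 2).ne')

theorem sum_normF_mul_normWn_le (ψ : C.V) (τ : C.W) :
    ∑ F, C.normF F ψ * C.normWn F τ ≤
      √(∑ F, max 1 (C.ω * C.hF F / C.thetaF F) * (C.αF F / C.hF F) * C.normF F ψ ^ 2)
        * √(∑ F, C.hF F / C.αF F * C.normWn F τ ^ 2) :=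
  Real.sum_mul_le_sqrt_mul_sqrt_of_one_le_mul _
    (fun F _ => mul_nonneg (C.normF_nonneg F ψ) (C.normWn_nonneg F τ))
    (fun F _ => C.dag1_weightF_nonneg F) (fun F _ => C.dagDiv_weightF_nonneg F)
    (fun F _ => one_le_max_one_mul_div_mul_div _ (C.αF_pos F).ne' (C.hF_pos F).ne')

theorem norm_pairB_le_dag1_mul_dagDiv (ψ : C.V) (τ : C.W) :
    ‖C.pairB ψ τ‖ ≤ C.dag1 ψ * C.dagDiv τ := by
  have elem_sum_le := add_le_add (Real.sum_mul_le_sqrt_mul_sqrt Finset.univ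
    (fun K => C.normAG K ψ) (fun K => C.normAinv K τ)) (C.sum_normL2_mul_normDiv_le ψ τ)
  refine (C.norm_pairB_le_sum ψ τ).trans ?_
  simp only [dag1, dagDiv, dag1Sq, dagDivSq, Finset.sum_add_distrib]
  rw [add_comm (∑ K, _ * C.normL2 K ψ ^ 2)]
  refine (add_le_add elem_sum_le (C.sum_normF_mul_normWn_le ψ τ)).trans ?_
  have hψK : 0 ≤ ∑ K, _ * C.normL2 K ψ ^ 2 :=
    Finset.sum_nonneg fun K _ => mul_nonneg (C.dag1_weightK_nonneg K) (sq_nonneg _)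
  have hτK : 0 ≤ ∑ K, _ * C.normDiv K τ ^ 2 :=
    Finset.sum_nonneg fun K _ => mul_nonneg (C.dagDiv_weightK_nonneg K) (sq_nonneg _)
  have hψF : 0 ≤ ∑ F, _ * C.normF F ψ ^ 2 :=
    Finset.sum_nonneg fun F _ => mul_nonneg (C.dag1_weightF_nonneg F) (sq_nonneg _)
  have hτF : 0 ≤ ∑ F, _ * C.normWn F τ ^ 2 :=
    Finset.sum_nonneg fun F _ => mul_nonneg (C.dagDiv_weightF_nonneg F) (sq_nonneg _)
  have hAG : 0 ≤ ∑ K, C.normAG K ψ ^ 2 := by positivity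
  have hAinv : 0 ≤ ∑ K, C.normAinv K τ ^ 2 := by positivity
  exact (add_le_add (Real.sqrt_mul_sqrt_add_sqrt_mul_sqrt_le hAG hAinv hψK hτK) le_rfl).trans
    (Real.sqrt_mul_sqrt_add_sqrt_mul_sqrt_le (add_nonneg hAG hψK) (add_nonneg hAinv hτK) hψF hτF)

end DG

/-- Lemma 3.1, lifting error: for all `φ ∈ H¹(𝒯_h)`,
`σ ∈ X_{Γ_N}(div,Ω)`, `φ̃ ∈ H¹_{Γ_D}(Ω)` and `σ_h ∈ [𝒫_p(𝒯_h)]^d ∩ X_{Γ_N}(div,Ω)`,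
the identity
`(𝔊(φ),σ)_{𝒯_h} + (φ,div σ)_{𝒯_h} − (φ,σ·n)_{ℱ_h^R}
  = (𝔊(φ−φ̃),σ−σ_h)_{𝒯_h} + (φ−φ̃,div(σ−σ_h))_{𝒯_h} − (φ−φ̃,(σ−σ_h)·n)_{ℱ_h^R}`
holds, and consequently the left-hand side is bounded by
`‖φ−φ̃‖_{†,1,𝒯_h} ‖σ−σ_h‖_{†,div,𝒯_h}`. -/
theorem lifting_error (C : DG) (φ : C.V) (σ : C.W)
    (φt : C.V) (hφt : φt ∈ C.H10) (σh : C.W) (hσh : σh ∈ C.Wh) :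
    C.pairB φ σ = C.pairB (φ - φt) (σ - σh) ∧
    ‖C.pairB φ σ‖ ≤ C.dag1 (φ - φt) * C.dagDiv (σ - σh) := by
  have hsplit := C.pairB_eq_pairB_sub_sub φ σ hφt hσh
  exact ⟨hsplit, hsplit ▸ C.norm_pairB_le_dag1_mul_dagDiv _ _⟩
end
end

section
/- (Continuity) For φ, v ∈ H¹(𝒯_h), if at least one of φ, v belongs to H¹_{Γ_D}(Ω), then |b_h(φ,v)| ≤ |||φ|||_{ω,𝒯_h} · |||v|||_{ω,𝒯_h}. -/
/-!
Once one argument is conforming, `s_h` drops out and `b_h` is a combination of the three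
weighted pairings `(μ·,·)`, `(γ·,·)` and `(A𝔊·,𝔊·)` with coefficients of modulus `ω²`, `ω`, `1`.
Local Cauchy–Schwarz followed by discrete Cauchy–Schwarz bounds each pairing by the product of
the corresponding seminorms, and a last Cauchy–Schwarz in `ℝ³` with weights `ω², ω, 1`
reassembles these into the energy norm.
-/

noncomputable section

theorem Real.sum_mul_mul_le_sqrt_mul_sqrt {ι : Type*} (s : Finset ι) {w : ι → ℝ}
    (hw : ∀ i ∈ s, 0 ≤ w i) (f g : ι → ℝ) :
    ∑ i ∈ s, w i * (f i * g i) ≤ √(∑ i ∈ s, w i * f i ^ 2) * √(∑ i ∈ s, w i * g i ^ 2) := by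
  have key := Real.sum_mul_le_sqrt_mul_sqrt s (fun i => √(w i) * f i) (fun i => √(w i) * g i)
  have hprod : ∀ i ∈ s, √(w i) * f i * (√(w i) * g i) = w i * (f i * g i) := fun i hi => by
    rw [mul_mul_mul_comm, Real.mul_self_sqrt (hw i hi)]
  have hsq : ∀ (h : ι → ℝ), ∀ i ∈ s, (√(w i) * h i) ^ 2 = w i * h i ^ 2 := fun h i hi => by
    rw [mul_pow, Real.sq_sqrt (hw i hi)]
  simpa only [Finset.sum_congr rfl hprod, Finset.sum_congr rfl (hsq f),
    Finset.sum_congr rfl (hsq g)] using key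

theorem Real.mul_add_mul_add_mul_le_sqrt_mul_sqrt {a b : ℝ} (ha : 0 ≤ a) (hb : 0 ≤ b)
    (x y z x' y' z' : ℝ) :
    a * (x * x') + b * (y * y') + z * z' ≤
      √(a * x ^ 2 + b * y ^ 2 + z ^ 2) * √(a * x' ^ 2 + b * y' ^ 2 + z' ^ 2) := by
  have hw : ∀ i ∈ Finset.univ, 0 ≤ ![a, b, 1] i := by
    intro i _; fin_cases i <;> simp [ha, hb]
  simpa [Fin.sum_univ_three] using
    Real.sum_mul_mul_le_sqrt_mul_sqrt Finset.univ hw ![x, y, z] ![x', y', z']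

namespace DG

variable (C : DG)

theorem norm_muPair_le (φ v : C.V) : ‖C.muPair φ v‖ ≤ C.normMuT φ * C.normMuT v :=
  (norm_sum_le _ _).trans <| (Finset.sum_le_sum fun K _ => C.csMu K φ v).trans <|
    Real.sum_mul_mul_le_sqrt_mul_sqrt _ (fun K _ => (C.μK_pos K).le) _ _

theorem norm_gamPair_le (φ v : C.V) : ‖C.gamPair φ v‖ ≤ C.normGamR φ * C.normGamR v :=
  (norm_sum_le _ _).trans <| (Finset.sum_le_sum fun F _ => C.csGam F φ v).trans <|
    Real.sum_mul_mul_le_sqrt_mul_sqrt _ (fun F _ => (C.γF_pos F).le) _ _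

theorem norm_agPair_le (φ v : C.V) : ‖C.agPair φ v‖ ≤ C.normAgrad φ * C.normAgrad v :=
  (norm_sum_le _ _).trans <| (Finset.sum_le_sum fun K _ => C.csAG K φ v).trans <|
    Real.sum_mul_le_sqrt_mul_sqrt _ _ _

theorem norm_bh_le {φ v : C.V} (h : φ ∈ C.H10 ∨ v ∈ C.H10) :
    ‖C.bh φ v‖ ≤ C.ω ^ 2 * ‖C.muPair φ v‖ + C.ω * ‖C.gamPair φ v‖ + ‖C.agPair φ v‖ := by
  have hω := C.ω_pos.le
  rw [bh, ah, C.sh_conf φ v h, add_zero]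
  refine (norm_add_le _ _).trans (add_le_add_left ((norm_sub_le _ _).trans_eq ?_) _)
  simp only [norm_mul, norm_neg, Complex.norm_I, Complex.norm_real, Real.norm_of_nonneg hω,
    Real.norm_of_nonneg (pow_nonneg hω 2), one_mul]

theorem enormSq_eq (v : C.V) :
    C.enormSq v = C.ω ^ 2 * C.normMuT v ^ 2 + C.ω * C.normGamR v ^ 2 + C.normAgrad v ^ 2 := by
  have hμ := Finset.sum_nonneg fun K (_ : K ∈ Finset.univ) =>
    mul_nonneg (C.μK_pos K).le (sq_nonneg (C.normL2 K v))
  have hγ := Finset.sum_nonneg fun F (_ : F ∈ Finset.univ) =>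
    mul_nonneg (C.γF_pos F).le (sq_nonneg (C.normF F v))
  rw [enormSq, normMuT, normGamR, normAgrad, Real.sq_sqrt hμ, Real.sq_sqrt hγ,
    Real.sq_sqrt (by positivity), Finset.sum_add_distrib, Finset.mul_sum, Finset.mul_sum]
  simp only [mul_assoc]
  ring

end DG

/-- continuity, eq. (2.11): for `φ, v ∈ H¹(𝒯_h)`, if at least one of
them belongs to `H¹_{Γ_D}(Ω)`, then `|b_h(φ,v)| ≤ |||φ|||_{ω,𝒯_h} |||v|||_{ω,𝒯_h}`. -/
theorem bh_continuity (C : DG) (φ v : C.V) (h : φ ∈ C.H10 ∨ v ∈ C.H10) :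
    ‖C.bh φ v‖ ≤ C.enorm φ * C.enorm v := by
  have hω := C.ω_pos.le
  calc ‖C.bh φ v‖
      ≤ C.ω ^ 2 * ‖C.muPair φ v‖ + C.ω * ‖C.gamPair φ v‖ + ‖C.agPair φ v‖ := C.norm_bh_le h
    _ ≤ C.ω ^ 2 * (C.normMuT φ * C.normMuT v) + C.ω * (C.normGamR φ * C.normGamR v)
          + C.normAgrad φ * C.normAgrad v := by
        gcongr
        exacts [C.norm_muPair_le φ v, C.norm_gamPair_le φ v, C.norm_agPair_le φ v]
    _ ≤ C.enorm φ * C.enorm v := by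
        rw [DG.enorm, DG.enorm, DG.enormSq_eq, DG.enormSq_eq]
        exact Real.mul_add_mul_add_mul_le_sqrt_mul_sqrt (by positivity) hω _ _ _ _ _ _
end
end

section
/- (Pythagorean splitting of the error) Let ũ ∈ H¹_{Γ_D}(Ω) be the unique function with b_h^+(ũ − u_h, v) = 0 for all v ∈ H¹_{Γ_D}(Ω), where b_h^+(φ,v) := ω²(μφ,v)_{𝒯_h} + ω(γφ,v)_{ℱ_h^R} + (A𝔊(φ),𝔊(v))_{𝒯_h}. Then the broken energy error splits exactly as |||u−u_h|||²_{ω,𝒯_h} = |||u_h−ũ|||²_{ω,𝒯_h} + |||u−ũ|||²_{ω,𝒯_h}, and moreover |||u_h−ũ|||_{ω,𝒯_h} ≤ ‖u_h − π^g u_h‖_{†,1,𝒯_h}. -/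
noncomputable section

/-! `b_h^+` is a Hermitian form whose quadratic form is `|||·|||²_{ω,𝒯_h}`, and `ũ` is the
`b_h^+`-orthogonal projection of `u_h` onto `H¹_{Γ_D}(Ω)`. Since `u ∈ H¹_{Γ_D}(Ω)`, the error
`u − u_h = (u − ũ) − (u_h − ũ)` is split into two `b_h^+`-orthogonal parts, whence the
identity. For the bound, `u_h − ũ` is also `b_h^+`-orthogonal to `π^g u_h − ũ`, so
`|||u_h − ũ||| ≤ |||u_h − π^g u_h||| ≤ ‖u_h − π^g u_h‖_{†,1,𝒯_h}`. -/

namespace DG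

variable (C : DG)

lemma muPair_sub_left (u v r : C.V) : C.muPair (u - v) r = C.muPair u r - C.muPair v r := by
  simp only [muPair, C.pairMu_sub_left, Finset.sum_sub_distrib]

lemma muPair_sub_right (u v r : C.V) : C.muPair u (v - r) = C.muPair u v - C.muPair u r := by
  simp only [muPair, C.pairMu_sub_right, Finset.sum_sub_distrib]

lemma gamPair_sub_left (u v r : C.V) : C.gamPair (u - v) r = C.gamPair u r - C.gamPair v r := by
  simp only [gamPair, C.pairGam_sub_left, Finset.sum_sub_distrib]

lemma gamPair_sub_right (u v r : C.V) : C.gamPair u (v - r) = C.gamPair u v - C.gamPair u r := by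
  simp only [gamPair, C.pairGam_sub_right, Finset.sum_sub_distrib]

lemma agPair_sub_left (u v r : C.V) : C.agPair (u - v) r = C.agPair u r - C.agPair v r := by
  simp only [agPair, C.pairAG_sub_left, Finset.sum_sub_distrib]

lemma agPair_sub_right (u v r : C.V) : C.agPair u (v - r) = C.agPair u v - C.agPair u r := by
  simp only [agPair, C.pairAG_sub_right, Finset.sum_sub_distrib]

lemma bhp_sub_left (u v r : C.V) : C.bhp (u - v) r = C.bhp u r - C.bhp v r := by
  simp only [bhp, muPair_sub_left, gamPair_sub_left, agPair_sub_left]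
  ring

lemma bhp_sub_right (u v r : C.V) : C.bhp u (v - r) = C.bhp u v - C.bhp u r := by
  simp only [bhp, muPair_sub_right, gamPair_sub_right, agPair_sub_right]
  ring

lemma bhp_conj_symm (φ v : C.V) : starRingEnd ℂ (C.bhp v φ) = C.bhp φ v := by
  simp only [bhp, muPair, gamPair, agPair, map_add, map_mul, map_sum, Complex.conj_ofReal,
    ← C.pairMu_symm, ← C.pairGam_symm, ← C.pairAG_symm]

lemma bhp_eq_zero_comm {φ v : C.V} : C.bhp φ v = 0 ↔ C.bhp v φ = 0 := by
  rw [← bhp_conj_symm, map_eq_zero]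

lemma bhp_self (v : C.V) : C.bhp v v = (C.enormSq v : ℂ) := by
  simp only [bhp, muPair, gamPair, agPair, enormSq, C.pairMu_self, C.pairGam_self,
    C.pairAG_self, Finset.mul_sum]
  push_cast
  rw [Finset.sum_add_distrib]
  ring_nf

lemma enormSq_nonneg (v : C.V) : 0 ≤ C.enormSq v := by
  have := C.ω_pos
  unfold enormSq
  refine add_nonneg (Finset.sum_nonneg fun K _ => ?_) (Finset.sum_nonneg fun F _ => ?_)
  · have := C.μK_pos K
    positivity
  · have := C.γF_pos F
    positivity

lemma enormSq_sub_of_bhp_eq_zero {m t : C.V} (h : C.bhp m t = 0) :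
    C.enormSq (m - t) = C.enormSq m + C.enormSq t := by
  have h' : C.bhp t m = 0 := C.bhp_eq_zero_comm.mp h
  have hexpand : C.bhp (m - t) (m - t) = C.bhp m m + C.bhp t t := by
    rw [bhp_sub_left, bhp_sub_right, bhp_sub_right, h, h']
    ring
  rw [bhp_self, bhp_self, bhp_self] at hexpand
  exact_mod_cast hexpand

lemma enormSq_le_of_bhp_eq_zero {m t : C.V} (h : C.bhp m t = 0) :
    C.enormSq m ≤ C.enormSq (m - t) := by
  rw [C.enormSq_sub_of_bhp_eq_zero h]
  linarith [C.enormSq_nonneg t]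

-- `ω²μ_K = (ω²h_K²/ϑ_K²)·(α_K/h_K²)` since `ϑ_K² = α_K/μ_K`.
lemma sq_ω_mul_μK_le (K : C.Elem) :
    C.ω ^ 2 * C.μK K ≤ max 1 (C.ω ^ 2 * C.hK K ^ 2 / C.thetaK K ^ 2) * (C.αK K / C.hK K ^ 2) := by
  have hα := C.αK_pos K
  have hμ := C.μK_pos K
  have hh := C.hK_pos K
  have hθ : C.thetaK K ^ 2 = C.αK K / C.μK K := Real.sq_sqrt (div_pos hα hμ).le
  calc C.ω ^ 2 * C.μK K
      = C.ω ^ 2 * C.hK K ^ 2 / C.thetaK K ^ 2 * (C.αK K / C.hK K ^ 2) := by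
        rw [hθ]; field_simp
    _ ≤ _ := by gcongr; exact le_max_right _ _

-- `ωγ_F = (ωh_F/ϑ_F)·(α_F/h_F)` since `ϑ_F = α_F/γ_F`.
lemma ω_mul_γF_le (F : C.FaceR) :
    C.ω * C.γF F ≤ max 1 (C.ω * C.hF F / C.thetaF F) * (C.αF F / C.hF F) := by
  have hα := C.αF_pos F
  have hγ := C.γF_pos F
  have hh := C.hF_pos F
  calc C.ω * C.γF F = C.ω * C.hF F / C.thetaF F * (C.αF F / C.hF F) := by
        rw [thetaF]; field_simp
    _ ≤ _ := by gcongr; exact le_max_right _ _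

lemma enormSq_le_dag1Sq (v : C.V) : C.enormSq v ≤ C.dag1Sq v := by
  unfold enormSq dag1Sq
  gcongr ∑ K, (?_ * _ + _) + ∑ F, ?_ * _ with K _ F _
  · exact C.sq_ω_mul_μK_le K
  · exact C.ω_mul_γF_le F

lemma enorm_le_dag1 (v : C.V) : C.enorm v ≤ C.dag1 v :=
  Real.sqrt_le_sqrt (C.enormSq_le_dag1Sq v)

end DG

theorem pythagorean_splitting_general (C : DG) (u uh ut : C.V)
    (hu : C.IsExactSol u)
    (hut : ut ∈ C.H10) (hproj : ∀ v ∈ C.H10, C.bhp (ut - uh) v = 0)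
    (πg : C.V → C.V) (hπg : C.IsPig πg) :
    C.enormSq (u - uh) = C.enormSq (uh - ut) + C.enormSq (u - ut) ∧
    C.enorm (uh - ut) ≤ C.dag1 (uh - πg uh) := by
  have horth : ∀ v ∈ C.H10, C.bhp (uh - ut) v = 0 := fun v hv => by
    have h := hproj v hv
    rw [C.bhp_sub_left] at h ⊢
    linear_combination -h
  constructor
  · have h := C.enormSq_sub_of_bhp_eq_zero
      (C.bhp_eq_zero_comm.mp (horth (u - ut) (C.H10.sub_mem hu.1 hut)))
    rwa [sub_sub_sub_cancel_right, add_comm] at h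
  · have h := C.enormSq_le_of_bhp_eq_zero (horth (πg uh - ut) (C.H10.sub_mem (hπg uh).1 hut))
    rw [sub_sub_sub_cancel_right] at h
    exact (Real.sqrt_le_sqrt h).trans (C.enorm_le_dag1 _)

/-- Pythagorean splitting of the error: let `ũ ∈ H¹_{Γ_D}(Ω)` be the
`b_h^+`-orthogonal projection of the IPDG solution `u_h` onto `H¹_{Γ_D}(Ω)`, i.e.
`b_h^+(ũ − u_h, v) = 0` for all `v ∈ H¹_{Γ_D}(Ω)`, where
`b_h^+(φ,v) = ω²(μφ,v)_{𝒯_h} + ω(γφ,v)_{ℱ_h^R} + (A𝔊(φ),𝔊(v))_{𝒯_h}`.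
Then the broken energy error splits exactly as
`|||u−u_h|||²_{ω,𝒯_h} = |||u_h−ũ|||²_{ω,𝒯_h} + |||u−ũ|||²_{ω,𝒯_h}`, and moreover
`|||u_h−ũ|||_{ω,𝒯_h} ≤ ‖u_h − π^g u_h‖_{†,1,𝒯_h}`. -/
theorem pythagorean_splitting (C : DG) (u uh ut : C.V)
    (hu : C.IsExactSol u) (huh : C.IsDiscreteSol uh)
    (hut : ut ∈ C.H10) (hproj : ∀ v ∈ C.H10, C.bhp (ut - uh) v = 0)
    (πg : C.V → C.V) (hπg : C.IsPig πg) :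
    C.enormSq (u - uh) = C.enormSq (uh - ut) + C.enormSq (u - ut) ∧
    C.enorm (uh - ut) ≤ C.dag1 (uh - πg uh) :=
  pythagorean_splitting_general C u uh ut hu hut hproj πg hπg
end
end
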